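/- arXiv:1207.1262 — 3 statements merged into one kernel-verified Lean document; each statement's English description precedes it below -/
import Mathlib

section
/- Dyson's constant term identity for n = 3: for every nonnegative integer k, the constant term of ∏_{1 ≤ i < j ≤ 3} (1 - x_i/x_j)^k (1 - x_j/x_i)^k equals (3k)!/(k!)³. -/
/-!
Each pair of factors combines as
`(1 - x_i/x_j)^k (1 - x_j/x_i)^k = (-x_j/x_i)^k (1 - x_i/x_j)^(2k)`, so the constant term is
`(-1)^k` times the coefficient of `(x₁/x₃)^(2k)` in
`(1 - x₁/x₂)^(2k) (1 - x₁/x₃)^(2k) (1 - x₂/x₃)^(2k)`. Writing `x₁/x₃ = (x₁/x₂)(x₂/x₃)` and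
expanding, only the terms with equal exponents of `x₁/x₂` and `x₂/x₃` contribute, which gives
Dixon's sum `∑ⱼ (-1)^j C(2k, j)^3`. Dixon's identity evaluates it to `(-1)^k (3k)!/(k!)^3`; we prove
it through the recurrence `(n+1)² S(n+1) + 3(3n+1)(3n+2) S(n) = 0` found by Zeilberger's algorithm.
-/

open Finset AddMonoidAlgebra

def dixonSum (R : Type*) [CommRing R] (m : ℕ) : R :=
  ∑ j ∈ range (m + 1), (-1) ^ j * (m.choose j : R) ^ 3

theorem cast_choose_succ_right_eq_div {K : Type*} [Field K] [CharZero K] {n i : ℕ} (hi : i ≤ n) :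
    (n.choose (i + 1) : K) = n.choose i * (n - i) / (i + 1) := by
  rw [eq_div_iff (Nat.cast_add_one_ne_zero i), ← Nat.cast_sub hi]
  exact_mod_cast Nat.choose_succ_right_eq n i

theorem cast_choose_succ_left_eq_div {K : Type*} [Field K] [CharZero K] {n i : ℕ} (hi : i ≤ n) :
    ((n + 1).choose i : K) = n.choose i * (n + 1) / (n + 1 - i) := by
  rw [← Nat.cast_add_one, ← Nat.cast_sub (by omega),
    eq_div_iff (Nat.cast_ne_zero.mpr (by omega))]
  exact_mod_cast (Nat.choose_mul_succ_eq n i).symm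

def dixonCertPoly (n j : ℚ) : ℚ :=
  (-116 + 207 * j - 147 * j ^ 2 + 48 * j ^ 3 - 6 * j ^ 4)
  + n * (-784 + 1113 * j - 594 * j ^ 2 + 132 * j ^ 3 - 9 * j ^ 4)
  + n ^ 2 * (-2084 + 2214 * j - 792 * j ^ 2 + 90 * j ^ 3)
  + n ^ 3 * (-2728 + 1932 * j - 348 * j ^ 2)
  + n ^ 4 * (-1760 + 624 * j)
  + n ^ 5 * (-448)

/-- Zeilberger's certificate for the recurrence of `dixonSum ℚ (2 * n)`, as produced by his
algorithm. -/
def dixonCert (n : ℕ) : ℕ → ℚ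
  | 0 => 0
  | i + 1 => (-1) ^ (i + 1) * ((2 * n).choose i : ℚ) ^ 3 * dixonCertPoly n (i + 1) /
      (2 * (2 * n + 1 - i) ^ 3)

theorem dixonCert_succ_sub (n j : ℕ) (hj : j ≤ 2 * n) :
    dixonCert n (j + 1) - dixonCert n j =
      (n + 1) ^ 2 * ((-1) ^ j * ((2 * n + 2).choose j : ℚ) ^ 3) +
        3 * (3 * n + 1) * (3 * n + 2) * ((-1) ^ j * ((2 * n).choose j : ℚ) ^ 3) := by
  rcases j with _ | i
  · have : (2 * n + 1 : ℚ) ≠ 0 := by positivity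
    simp only [dixonCert, dixonCertPoly, Nat.choose_zero_right]
    norm_num
    field_simp
    ring
  · have hi : (i : ℚ) + 1 ≤ 2 * n := by exact_mod_cast hj
    have h₁ : (2 * n + 1 - (i + 1) : ℚ) ≠ 0 := by linarith
    have h₂ : (2 * n + 1 + 1 - (i + 1) : ℚ) ≠ 0 := by linarith
    have h₃ : (2 * n + 1 - i : ℚ) ≠ 0 := by linarith
    simp only [dixonCert, dixonCertPoly]
    rw [show 2 * n + 2 = 2 * n + 1 + 1 by ring, cast_choose_succ_left_eq_div (by omega),
      cast_choose_succ_left_eq_div (by omega), cast_choose_succ_right_eq_div (by omega)]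
    push_cast
    field_simp
    ring

theorem dixonCert_two_mul_add_one (n : ℕ) :
    dixonCert n (2 * n + 1) = (n + 1) ^ 2 * ((2 * n + 2) ^ 3 - 1) := by
  simp only [dixonCert, dixonCertPoly, Nat.choose_self, pow_succ, pow_mul]
  push_cast
  norm_num
  ring

theorem dixonSum_recurrence (n : ℕ) :
    (n + 1) ^ 2 * dixonSum ℚ (2 * (n + 1)) +
      3 * (3 * n + 1) * (3 * n + 2) * dixonSum ℚ (2 * n) = 0 := by
  have htelescope := sum_range_sub (dixonCert n) (2 * n + 1)
  rw [sum_congr rfl fun j hj => dixonCert_succ_sub n j (by simp at hj; omega), sum_add_distrib,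
    ← mul_sum, ← mul_sum, dixonCert_two_mul_add_one] at htelescope
  -- the terms `j = 2n+1, 2n+2` of `dixonSum ℚ (2n+2)` lie outside the telescoping range
  have hsplit : dixonSum ℚ (2 * (n + 1)) =
      ∑ j ∈ range (2 * n + 1), (-1) ^ j * ((2 * n + 2).choose j : ℚ) ^ 3 - (2 * n + 2) ^ 3 + 1 := by
    rw [dixonSum, show 2 * (n + 1) = 2 * n + 1 + 1 by ring, sum_range_succ, sum_range_succ,
      Nat.choose_self, Nat.choose_succ_self_right]
    simp [pow_succ, pow_mul]
    ring
  rw [hsplit, dixonSum]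
  simp only [dixonCert] at htelescope
  linear_combination htelescope

theorem dixonSum_two_mul (n : ℕ) :
    dixonSum ℚ (2 * n) = (-1) ^ n * (3 * n).factorial / n.factorial ^ 3 := by
  induction n with
  | zero => simp [dixonSum]
  | succ n ih =>
    have hrec := dixonSum_recurrence n
    rw [ih] at hrec
    rw [show 3 * (n + 1) = 3 * n + 2 + 1 by ring, Nat.factorial_succ, Nat.factorial_succ,
      Nat.factorial_succ, Nat.factorial_succ]
    push_cast
    field_simp at hrec ⊢
    linear_combination (n + 1 : ℚ) * hrec

section LaurentBinomial

variable {R M : Type*} [CommRing R]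

theorem one_sub_single_pow [AddCommMonoid M] (d : M) (m : ℕ) :
    (1 - single d (1 : R)) ^ m =
      ∑ i ∈ range (m + 1), single (i • d) ((-1) ^ i * (m.choose i : R)) := by
  rw [sub_eq_neg_add, ← single_neg, add_pow]
  refine sum_congr rfl fun i _ => ?_
  rw [single_pow, one_pow, mul_one, natCast_def, single_mul_single, add_zero]

theorem one_sub_single_sub_pow_mul_one_sub_single_sub_pow [AddCommGroup M] (a b : M) (k : ℕ) :
    (1 - single (a - b) (1 : R)) ^ k * (1 - single (b - a) 1) ^ k =
      single (k • (b - a)) ((-1) ^ k) * (1 - single (a - b) 1) ^ (2 * k) := by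
  have hinv : single (a - b) (1 : R) * single (b - a) 1 = 1 := by
    rw [single_mul_single, sub_add_sub_cancel, sub_self, one_mul, one_def]
  have hpair : (1 - single (a - b) (1 : R)) * (1 - single (b - a) 1) =
      single (b - a) (-1) * (1 - single (a - b) 1) ^ 2 := by
    rw [single_neg]
    linear_combination (single (a - b) (1 : R) - 1) * hinv
  rw [← mul_pow, hpair, mul_pow, single_pow, ← pow_mul]

theorem coeff_one_sub_single_pow_triple_eq_dixonSum [AddCommMonoid M] {a b : M}
    (hab : ∀ p q p' q' : ℕ, p • a + q • b = p' • a + q' • b → p = p' ∧ q = q') (m : ℕ) :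
    ((1 - single a (1 : R)) ^ m * (1 - single (a + b) 1) ^ m * (1 - single b 1) ^ m).coeff
      (m • (a + b)) = dixonSum R m := by
  classical
  have hsupp (i j l : ℕ) :
      i • a + j • (a + b) + l • b = m • (a + b) ↔ i + j = m ∧ j + l = m := by
    rw [show i • a + j • (a + b) + l • b = (i + j) • a + (j + l) • b by
      simp only [smul_add, add_smul]; abel, smul_add]
    exact ⟨hab _ _ _ _, fun ⟨hi, hl⟩ => by rw [hi, hl]⟩
  simp only [one_sub_single_pow, sum_mul, mul_sum, single_mul_single, coeff_sum, coeff_single,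
    Finsupp.coe_finsetSum, Finset.sum_apply, Finsupp.single_apply, hsupp]
  rw [dixonSum, sum_comm]
  refine sum_congr rfl fun j hj => ?_
  have hj : j ≤ m := Nat.lt_succ_iff.mp (mem_range.mp hj)
  have hcond (i l : ℕ) : (i + j = m ∧ j + l = m) ↔ (i = m - j ∧ l = m - j) := by omega
  simp only [hcond, ite_and, sum_ite_eq', mem_range, Nat.sub_lt_succ, if_true, Nat.choose_symm hj]
  linear_combination (-1) ^ j * (m.choose j : R) ^ 3 *
    pow_mul_pow_eq_one (m - j) (by norm_num : (-1 : R) * -1 = 1)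

end LaurentBinomial

theorem nsmul_single_sub_add_nsmul_single_sub_inj {ι : Type*} {i j l : ι}
    (hij : i ≠ j) (hil : i ≠ l) (hjl : j ≠ l) (p q p' q' : ℕ)
    (h : p • (Finsupp.single i (1 : ℤ) - Finsupp.single j 1) +
        q • (Finsupp.single j 1 - Finsupp.single l 1) =
      p' • (Finsupp.single i 1 - Finsupp.single j 1) +
        q' • (Finsupp.single j 1 - Finsupp.single l 1)) :
    p = p' ∧ q = q' := by
  have hi := DFunLike.congr_fun h i
  have hl := DFunLike.congr_fun h l
  simp [hij, hil, hil.symm, hjl.symm] at hi hl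
  omega

/-- Dyson's constant term identity for `n = 3`: the constant term (coefficient of
`x₁⁰x₂⁰x₃⁰`) of `∏_{1 ≤ i < j ≤ 3} (1 - x_i/x_j)^k (1 - x_j/x_i)^k` equals `(3k)!/(k!)³`. -/
theorem dyson_constant_term_n_eq_three (k : ℕ) :
    (AddMonoidAlgebra.coeff (∏ p ∈ Finset.univ.filter (fun p : Fin 3 × Fin 3 => p.1 < p.2),
        ((1 - AddMonoidAlgebra.single
              (Finsupp.single p.1 (1 : ℤ) - Finsupp.single p.2 (1 : ℤ)) (1 : ℚ)) ^ k *
         (1 - AddMonoidAlgebra.single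
              (Finsupp.single p.2 (1 : ℤ) - Finsupp.single p.1 (1 : ℤ)) (1 : ℚ)) ^ k) :
        AddMonoidAlgebra ℚ (Fin 3 →₀ ℤ))) 0 =
      (Nat.factorial (3 * k) : ℚ) / ((Nat.factorial k : ℚ)) ^ 3 := by
  have hpairs : univ.filter (fun p : Fin 3 × Fin 3 => p.1 < p.2) = {(0, 1), (0, 2), (1, 2)} := by
    decide
  simp only [one_sub_single_sub_pow_mul_one_sub_single_sub_pow]
  rw [prod_mul_distrib, hpairs, prod_insert (by decide), prod_insert (by decide), prod_singleton,
    prod_insert (by decide), prod_insert (by decide), prod_singleton, single_mul_single,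
    single_mul_single, coeff_single_mul_apply]
  dsimp only
  set a : Fin 3 →₀ ℤ := Finsupp.single 0 1 - Finsupp.single 1 1
  set b : Fin 3 →₀ ℤ := Finsupp.single 1 1 - Finsupp.single 2 1
  have hdiag : Finsupp.single 0 1 - Finsupp.single 2 1 = a + b := (sub_add_sub_cancel _ _ _).symm
  have hdeg : -(k • (Finsupp.single 1 1 - Finsupp.single 0 1) +
      (k • (Finsupp.single 2 1 - Finsupp.single 0 1) +
        k • (Finsupp.single 2 1 - Finsupp.single 1 1))) + 0 = (2 * k) • (a + b) := by
    simp only [a, b]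
    module
  have hsign : ((-1 : ℚ) ^ k) ^ 4 = 1 := by rw [← pow_mul, mul_comm, pow_mul]; norm_num
  rw [hdiag, hdeg, ← mul_assoc ((1 - single a (1 : ℚ)) ^ (2 * k)),
    coeff_one_sub_single_pow_triple_eq_dixonSum
      (nsmul_single_sub_add_nsmul_single_sub_inj (by decide) (by decide) (by decide)),
    dixonSum_two_mul]
  linear_combination ((3 * k).factorial / (k.factorial : ℚ) ^ 3) * hsign
end

section
/- Dyson's integral evaluation for n = 2: for every real γ > 0, (1/(2π)²) ∫_{-π}^{π} ∫_{-π}^{π} |e^{iθ₁} - e^{iθ₂}|^{2γ} dθ₁ dθ₂ = Γ(1 + 2γ) / Γ(1 + γ)². -/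
/-!
Since `‖e^{ia} - e^{ib}‖ = ‖2 sin ((a - b) / 2)‖`, the inner integral does not depend on `θ₁` by
`2π`-periodicity, and the double integral equals `2π · 2^{2γ+1} ∫₀^π sin^{2γ} u du`. The substitution
`x = sin² (u / 2)` turns the last integral into `2^{2γ} B(γ + 1/2, γ + 1/2)`, and Legendre's
duplication formula rewrites `2^{4γ} Γ(γ + 1/2)² / (π Γ(2γ + 1))` as `Γ(1 + 2γ) / Γ(1 + γ)²`.
-/

open Real MeasureTheory Set

theorem Complex.norm_exp_ofReal_mul_I_sub_exp_ofReal_mul_I (a b : ℝ) :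
    ‖Complex.exp (a * Complex.I) - Complex.exp (b * Complex.I)‖ = ‖2 * Real.sin ((a - b) / 2)‖ := by
  have : Complex.exp (a * Complex.I) - Complex.exp (b * Complex.I) =
      Complex.exp (b * Complex.I) * (Complex.exp (Complex.I * ↑(a - b)) - 1) := by
    rw [mul_sub, ← Complex.exp_add]
    push_cast
    ring_nf
  rw [this, norm_mul, Complex.norm_exp_ofReal_mul_I, one_mul, Complex.norm_exp_I_mul_ofReal_sub_one]

theorem integral_Ioo_rpow_mul_one_sub_rpow {a b : ℝ} (ha : 0 < a) (hb : 0 < b) :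
    ∫ x in Ioo (0 : ℝ) 1, x ^ (a - 1) * (1 - x) ^ (b - 1) =
      Gamma a * Gamma b / Gamma (a + b) := by
  have hbeta := Complex.betaIntegral_eq_Gamma_mul_div a b (by simpa) (by simpa)
  rw [Complex.betaIntegral, intervalIntegral.integral_of_le zero_le_one,
    integral_Ioc_eq_integral_Ioo] at hbeta
  apply Complex.ofReal_injective
  rw [← integral_complex_ofReal]
  push_cast
  rw [← Complex.ofReal_add, Complex.Gamma_ofReal, Complex.Gamma_ofReal, Complex.Gamma_ofReal] at hbeta
  rw [← hbeta]
  refine setIntegral_congr_fun measurableSet_Ioo fun x hx => ?_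
  rw [Complex.ofReal_cpow hx.1.le, Complex.ofReal_cpow (sub_nonneg.2 hx.2.le)]
  push_cast
  ring_nf

theorem image_one_sub_cos_div_two_Ioo :
    (fun u => (1 - cos u) / 2) '' Ioo 0 π = Ioo 0 1 := by
  refine Subset.antisymm ?_ ?_
  · rintro _ ⟨u, hu, rfl⟩
    have hsin := sin_pos_of_pos_of_lt_pi hu.1 hu.2
    have := sin_sq_add_cos_sq u
    constructor <;> nlinarith [cos_le_one u, neg_one_le_cos u]
  · simpa using intermediate_value_Ioo pi_pos.le
      (f := fun u => (1 - cos u) / 2) (by fun_prop)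

theorem integral_sin_rpow {s : ℝ} (hs : -1 < s) :
    ∫ u in (0 : ℝ)..π, sin u ^ s = 2 ^ s * Gamma ((s + 1) / 2) ^ 2 / Gamma (s + 1) := by
  set a := (s + 1) / 2 with ha
  have hderiv : ∀ u ∈ Ioo 0 π,
      HasDerivWithinAt (fun u => (1 - cos u) / 2) (sin u / 2) (Ioo 0 π) u := fun u _ => by
    simpa using (((hasDerivAt_cos u).const_sub 1).div_const 2).hasDerivWithinAt
  have hinj : InjOn (fun u => (1 - cos u) / 2) (Ioo 0 π) := fun u hu v hv huv =>
    injOn_cos (Ioo_subset_Icc_self hu) (Ioo_subset_Icc_self hv) (by simpa using huv)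
  have hsubst := integral_image_eq_integral_abs_deriv_smul measurableSet_Ioo hderiv hinj
    (fun x => x ^ (a - 1) * (1 - x) ^ (a - 1))
  have hpt : ∀ u ∈ Ioo 0 π, |sin u / 2| •
      (((1 - cos u) / 2) ^ (a - 1) * (1 - (1 - cos u) / 2) ^ (a - 1)) = sin u ^ s / 2 ^ s := by
    intro u hu
    have hsin₀ := sin_pos_of_pos_of_lt_pi hu.1 hu.2
    have hsin : 0 < sin u / 2 := by positivity
    have hprod : (1 - cos u) / 2 * (1 - (1 - cos u) / 2) = (sin u / 2) ^ (2 : ℝ) := by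
      rw [rpow_two, div_pow, sin_sq]; ring
    rw [smul_eq_mul, ← mul_rpow (by nlinarith [cos_le_one u]) (by nlinarith [neg_one_le_cos u]),
      hprod, ← rpow_mul hsin.le, abs_of_pos hsin, mul_comm, ← rpow_add_one hsin.ne',
      show 2 * (a - 1) + 1 = s by rw [ha]; ring, div_rpow hsin₀.le zero_le_two]
  rw [image_one_sub_cos_div_two_Ioo, integral_Ioo_rpow_mul_one_sub_rpow (by rw [ha]; linarith)
    (by rw [ha]; linarith), setIntegral_congr_fun measurableSet_Ioo hpt, MeasureTheory.integral_div,
    show a + a = s + 1 by ring] at hsubst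
  rw [intervalIntegral.integral_of_le pi_pos.le, integral_Ioc_eq_integral_Ioo]
  rw [eq_div_iff (rpow_pos_of_pos two_pos s).ne'] at hsubst
  rw [← hsubst]
  ring

theorem integral_norm_exp_ofReal_mul_I_sub_rpow (p θ : ℝ) :
    ∫ φ in (-π)..π, ‖Complex.exp (θ * Complex.I) - Complex.exp (φ * Complex.I)‖ ^ p =
      ∫ t in (0 : ℝ)..2 * π, ‖2 * sin (t / 2)‖ ^ p := by
  have hper : Function.Periodic (fun t => ‖2 * sin (t / 2)‖ ^ p) (2 * π) := fun t => by
    simp only [add_div, mul_div_cancel_left₀ π two_ne_zero, sin_add_pi, mul_neg, norm_neg]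
  simp_rw [Complex.norm_exp_ofReal_mul_I_sub_exp_ofReal_mul_I]
  rw [intervalIntegral.integral_comp_sub_left (fun t => ‖2 * sin (t / 2)‖ ^ p) θ]
  simpa [sub_eq_add_neg, add_assoc, two_mul] using hper.intervalIntegral_add_eq (θ - π) 0

theorem integral_norm_two_mul_sin_half_rpow (p : ℝ) :
    ∫ t in (0 : ℝ)..2 * π, ‖2 * sin (t / 2)‖ ^ p = 2 ^ (p + 1) * ∫ u in (0 : ℝ)..π, sin u ^ p := by
  have hpt : EqOn (fun u => ‖2 * sin u‖ ^ p) (fun u => 2 ^ p * sin u ^ p) (uIcc 0 π) := by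
    intro u hu
    rw [uIcc_of_le pi_pos.le] at hu
    have hsin := sin_nonneg_of_nonneg_of_le_pi hu.1 hu.2
    simp only [norm_mul, Real.norm_two, Real.norm_of_nonneg hsin, mul_rpow zero_le_two hsin]
  rw [intervalIntegral.integral_comp_div (fun u => ‖2 * sin u‖ ^ p) two_ne_zero, zero_div,
    mul_div_cancel_left₀ π two_ne_zero, intervalIntegral.integral_congr hpt,
    intervalIntegral.integral_const_mul, smul_eq_mul, rpow_add_one two_ne_zero]
  ring

theorem two_rpow_mul_Gamma_add_half_mul_Gamma_add_one (γ : ℝ) :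
    2 ^ (2 * γ) * Gamma (γ + 1 / 2) * Gamma (γ + 1) = √π * Gamma (2 * γ + 1) := by
  have hdup := Gamma_mul_Gamma_add_half (γ + 1 / 2)
  rw [show γ + 1 / 2 + 1 / 2 = γ + 1 by ring, show 2 * (γ + 1 / 2) = 2 * γ + 1 by ring,
    show 1 - (2 * γ + 1) = -(2 * γ) by ring, rpow_neg zero_le_two] at hdup
  rw [mul_assoc, hdup]
  field_simp

/-- Dyson's integral evaluation for `n = 2`: for `γ > 0`,
`(1/(2π)²) ∫_{-π}^{π} ∫_{-π}^{π} |e^{iθ₁} - e^{iθ₂}|^{2γ} dθ₁ dθ₂ = Γ(1+2γ)/Γ(1+γ)²`. -/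
theorem dyson_integral_n_eq_two (γ : ℝ) (hγ : 0 < γ) :
    (1 / (2 * π) ^ 2) *
      ∫ θ₁ in (-π)..π, ∫ θ₂ in (-π)..π,
        ‖Complex.exp (θ₁ * Complex.I) - Complex.exp (θ₂ * Complex.I)‖ ^ (2 * γ) =
      Real.Gamma (1 + 2 * γ) / Real.Gamma (1 + γ) ^ 2 := by
  simp_rw [integral_norm_exp_ofReal_mul_I_sub_rpow, integral_norm_two_mul_sin_half_rpow,
    integral_sin_rpow (show -1 < 2 * γ by linarith)]
  rw [intervalIntegral.integral_const, smul_eq_mul, show (2 * γ + 1) / 2 = γ + 1 / 2 by ring,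
    rpow_add_one two_ne_zero, add_comm 1 (2 * γ), add_comm 1 γ]
  have hdup := two_rpow_mul_Gamma_add_half_mul_Gamma_add_one γ
  have hΓ₁ := (Gamma_pos_of_pos (by linarith : 0 < γ + 1)).ne'
  have hΓ₂ := (Gamma_pos_of_pos (by linarith : 0 < 2 * γ + 1)).ne'
  generalize (2 : ℝ) ^ (2 * γ) = X at hdup ⊢
  generalize Gamma (γ + 1 / 2) = A at hdup ⊢
  generalize Gamma (γ + 1) = B at hdup hΓ₁ ⊢
  generalize Gamma (2 * γ + 1) = C at hdup hΓ₂ ⊢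
  field_simp
  linear_combination 2 * (X * A * B + √π * C) * hdup + 2 * C ^ 2 * sq_sqrt pi_pos.le
end

section
/- Mehta's integral for n = 2: for real γ > 0, (1/(2π)) ∫_{-∞}^{∞} ∫_{-∞}^{∞} e^{-t₁²/2} e^{-t₂²/2} |t₁ - t₂|^{2γ} dt₁ dt₂ = Γ(1+γ)Γ(1+2γ) / Γ(1+γ)². -/
/-!
Substitute `t₂ = t₁ - s` and complete the square:
`e^{-t₁²/2} e^{-(t₁-s)²/2} = e^{-s²/4} e^{-(t₁-s/2)²}`. After Fubini the `t₁`-integral is the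
Gaussian integral `√π`, and the double integral becomes
`√π ∫ |s|^{2γ} e^{-s²/4} ds = √π 2^{2γ+1} Γ(γ+1/2)`. Legendre's duplication formula turns
`2^{2γ} Γ(γ+1/2) / √π` into `Γ(1+2γ) / Γ(1+γ)`.
-/

open Real MeasureTheory

lemma integrable_abs_rpow_mul_exp_neg_mul_sq {b : ℝ} (hb : 0 < b) {s : ℝ} (hs : -1 < s) :
    Integrable fun x : ℝ => |x| ^ s * exp (-b * x ^ 2) := by
  have hIoi : IntegrableOn (fun x : ℝ => |x| ^ s * exp (-b * x ^ 2)) (Set.Ioi 0) :=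
    (integrableOn_rpow_mul_exp_neg_mul_sq hb hs).congr_fun
      (fun x hx => by rw [abs_of_pos hx]) measurableSet_Ioi
  rw [← integrableOn_univ, ← Set.Iio_union_Ici (a := (0 : ℝ)), integrableOn_union,
    integrableOn_Ici_iff_integrableOn_Ioi]
  refine ⟨?_, hIoi⟩
  rw [← (Measure.measurePreserving_neg (volume : Measure ℝ)).integrableOn_comp_preimage
      (Homeomorph.neg ℝ).measurableEmbedding]
  simpa [Function.comp_def, abs_neg, neg_sq] using hIoi

lemma integral_abs_rpow_mul_exp_neg_mul_sq {b : ℝ} (hb : 0 < b) {s : ℝ} (hs : -1 < s) :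
    ∫ x : ℝ, |x| ^ s * exp (-b * x ^ 2) = b ^ (-(s + 1) / 2) * Gamma ((s + 1) / 2) := by
  have h := integral_comp_abs (f := fun x : ℝ => x ^ s * exp (-b * x ^ (2 : ℝ)))
  rw [integral_rpow_mul_exp_neg_mul_rpow two_pos hs hb] at h
  simp only [rpow_two, sq_abs] at h
  rw [h]
  ring

lemma exp_neg_sq_div_two_mul_exp_neg_sub_sq_div_two (t s : ℝ) :
    exp (-t ^ 2 / 2) * exp (-(t - s) ^ 2 / 2) = exp (-s ^ 2 / 4) * exp (-(t - s / 2) ^ 2) := by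
  rw [← exp_add, ← exp_add]
  ring_nf

lemma integral_exp_neg_sub_sq (c : ℝ) : ∫ t : ℝ, exp (-(t - c) ^ 2) = √π := by
  rw [integral_sub_right_eq_self (μ := volume) (fun t : ℝ => exp (-t ^ 2)) c]
  simpa using integral_gaussian 1

theorem integral_integral_exp_neg_sq_div_two_mul_comp_sub {f : ℝ → ℝ}
    (hf : Integrable fun s => f s * exp (-s ^ 2 / 4)) :
    ∫ t₁, ∫ t₂, exp (-t₁ ^ 2 / 2) * exp (-t₂ ^ 2 / 2) * f (t₁ - t₂) =
      √π * ∫ s, f s * exp (-s ^ 2 / 4) := by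
  set K : ℝ → ℝ → ℝ := fun t s => f s * exp (-s ^ 2 / 4) * exp (-(t - s / 2) ^ 2) with hK
  have hK_inner (s : ℝ) : ∫ t, K t s = √π * (f s * exp (-s ^ 2 / 4)) := by
    rw [hK, integral_const_mul, integral_exp_neg_sub_sq, mul_comm]
  have hK_integrable : Integrable (Function.uncurry K) (volume.prod volume) := by
    have hmeas : AEStronglyMeasurable (Function.uncurry K) (volume.prod volume) := by
      have hG : Continuous fun p : ℝ × ℝ => exp (-(p.1 - p.2 / 2) ^ 2) := by fun_prop
      exact hf.aestronglyMeasurable.comp_snd.mul hG.aestronglyMeasurable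
    refine (integrable_prod_iff' hmeas).2 ⟨.of_forall fun s => ?_, ?_⟩
    · exact ((integrable_exp_neg_mul_sq one_pos).comp_sub_right (s / 2)).const_mul
        (f s * exp (-s ^ 2 / 4)) |>.congr (.of_forall fun t => by simp [hK])
    · have hnorm (s : ℝ) :
          ∫ t, ‖Function.uncurry K (t, s)‖ = ‖f s * exp (-s ^ 2 / 4)‖ * √π := by
        simp only [Function.uncurry_apply_pair, hK, norm_mul, norm_of_nonneg (exp_pos _).le]
        rw [integral_const_mul, integral_exp_neg_sub_sq]
      simpa only [hnorm] using hf.norm.mul_const √π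
  calc ∫ t₁, ∫ t₂, exp (-t₁ ^ 2 / 2) * exp (-t₂ ^ 2 / 2) * f (t₁ - t₂)
      = ∫ t₁, ∫ s, K t₁ s := by
        congr 1; funext t₁
        rw [← integral_sub_left_eq_self _ volume t₁]
        simp only [sub_sub_cancel, hK, exp_neg_sq_div_two_mul_exp_neg_sub_sq_div_two]
        congr 1; funext s; ring
    _ = ∫ s, ∫ t₁, K t₁ s := integral_integral_swap hK_integrable
    _ = √π * ∫ s, f s * exp (-s ^ 2 / 4) := by
        simp_rw [hK_inner]
        exact integral_const_mul _ _

lemma Gamma_add_half_mul_Gamma_one_add_mul_two_rpow (s : ℝ) :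
    Gamma (s + 1 / 2) * Gamma (1 + s) * 2 ^ (2 * s) = Gamma (1 + 2 * s) * √π := by
  have h := Gamma_mul_Gamma_add_half (s + 1 / 2)
  rw [show s + 1 / 2 + 1 / 2 = 1 + s by ring, show 2 * (s + 1 / 2) = 1 + 2 * s by ring,
    show (1 : ℝ) - (1 + 2 * s) = -(2 * s) by ring, rpow_neg two_pos.le] at h
  rw [h]
  field_simp

/-- Mehta's integral for `n = 2`: for `γ > 0`,
`(1/(2π)) ∫∫ e^{-t₁²/2} e^{-t₂²/2} |t₁-t₂|^{2γ} dt₁ dt₂ = Γ(1+γ)Γ(1+2γ)/Γ(1+γ)²`. -/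
theorem mehta_integral_n_eq_two (γ : ℝ) (hγ : 0 < γ) :
    (1 / (2 * π)) *
      ∫ t₁ : ℝ, ∫ t₂ : ℝ,
        Real.exp (-t₁ ^ 2 / 2) * Real.exp (-t₂ ^ 2 / 2) * |t₁ - t₂| ^ (2 * γ) =
      Real.Gamma (1 + γ) * Real.Gamma (1 + 2 * γ) / Real.Gamma (1 + γ) ^ 2 := by
  have hquarter (s : ℝ) : -s ^ 2 / 4 = -(1 / 4) * s ^ 2 := by ring
  have hs : -1 < 2 * γ := by linarith
  have hf : Integrable fun s : ℝ => |s| ^ (2 * γ) * exp (-s ^ 2 / 4) := by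
    simpa only [hquarter] using integrable_abs_rpow_mul_exp_neg_mul_sq (by norm_num) hs
  have hI := integral_integral_exp_neg_sq_div_two_mul_comp_sub hf
  simp only [hquarter, integral_abs_rpow_mul_exp_neg_mul_sq (by norm_num : (0 : ℝ) < 1 / 4) hs]
    at hI
  have hpow : (1 / 4 : ℝ) ^ (-(2 * γ + 1) / 2) = 2 * 2 ^ (2 * γ) := by
    rw [show (1 / 4 : ℝ) = 2 ^ (-2 : ℝ) by norm_num, ← rpow_mul two_pos.le,
      show -2 * (-(2 * γ + 1) / 2) = 1 + 2 * γ by ring, rpow_add two_pos, rpow_one]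
  have hdup := Gamma_add_half_mul_Gamma_one_add_mul_two_rpow γ
  rw [show γ + 1 / 2 = (2 * γ + 1) / 2 by ring] at hdup
  have hΓ : Gamma (1 + γ) ≠ 0 := (Gamma_pos_of_pos (by linarith)).ne'
  rw [hI, hpow, pow_two, mul_div_mul_left _ _ hΓ, eq_div_iff hΓ]
  field_simp
  linear_combination √π * hdup + Gamma (1 + 2 * γ) * mul_self_sqrt pi_pos.le
end
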